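/- Let ρ : Matrix I I ℂ satisfy T · ρ = ρ · T, and let (U_j)_{j ∈ ZMod n} be a family of matrices in Matrix I I ℂ satisfying U_j = T^j · U_0 · (Tᴴ)^j for every j ∈ ZMod n (where T^j is well defined since T^n = 1). Then for every j ∈ ZMod n, trace(U_j · ρ · U_jᴴ · Z 0) = trace(U_0 · ρ · U_0ᴴ · Z (-j)), and consequently Σ_{j ∈ ZMod n} trace(U_j · ρ · U_jᴴ · Z 0) = Σ_{j ∈ ZMod n} trace(U_0 · ρ · U_0ᴴ · Z j). That is, the n parameter-shifted derivative terms can all be evaluated from a single circuit by measuring all qubits. -/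
import Mathlib


open scoped Matrix


/-- The cyclic shift on computational basis states of `n` qubits:
`shift n x = (i ↦ x (i - 1))`. -/
def shift (n : ℕ) (x : ZMod n → Fin 2) : ZMod n → Fin 2 := fun i => x (i - 1)

/-- The permutation matrix `T` of the cyclic shift: `T` sends the basis vector labelled `y`
to the one labelled `shift n y`. -/
def Tmat (n : ℕ) [NeZero n] : Matrix (ZMod n → Fin 2) (ZMod n → Fin 2) ℂ :=
  fun x y => if x = shift n y then 1 else 0

/-- The Pauli-Z operator on qubit `j`: diagonal with entries `(-1)^(x j)`. -/
def Zmat (n : ℕ) [NeZero n] (j : ZMod n) : Matrix (ZMod n → Fin 2) (ZMod n → Fin 2) ℂ :=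
  Matrix.diagonal fun x => (-1 : ℂ) ^ ((x j : ℕ))

lemma shift_injective (n : ℕ) : Function.Injective (shift n) := by
  intro x y h
  funext i
  have := congrFun h (i + 1)
  simpa [shift] using this

lemma Tmat_conjT_apply (n : ℕ) [NeZero n] (x y : ZMod n → Fin 2) :
    (Tmat n)ᴴ x y = if y = shift n x then 1 else 0 := by
  simp only [Matrix.conjTranspose_apply, Tmat]
  split <;> simp

lemma mul_T_apply (n : ℕ) [NeZero n] (M : Matrix (ZMod n → Fin 2) (ZMod n → Fin 2) ℂ)
    (x y : ZMod n → Fin 2) : (M * Tmat n) x y = M x (shift n y) := by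
  simp [Matrix.mul_apply, Tmat, mul_ite, mul_one, mul_zero]

lemma TconjT_mul_apply (n : ℕ) [NeZero n] (M : Matrix (ZMod n → Fin 2) (ZMod n → Fin 2) ℂ)
    (x y : ZMod n → Fin 2) : ((Tmat n)ᴴ * M) x y = M (shift n x) y := by
  simp only [Matrix.mul_apply, Tmat_conjT_apply, ite_mul, one_mul, zero_mul,
    Finset.sum_ite_eq, Finset.sum_ite_eq', Finset.mem_univ, if_true]

lemma TconjT_mul_T (n : ℕ) [NeZero n] : (Tmat n)ᴴ * Tmat n = 1 := by
  ext x y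
  rw [mul_T_apply, Tmat_conjT_apply, Matrix.one_apply]
  by_cases h : x = y
  · simp [h]
  · rw [if_neg (fun hc => h (shift_injective n hc.symm)), if_neg h]

lemma T_mul_TconjT (n : ℕ) [NeZero n] : Tmat n * (Tmat n)ᴴ = 1 :=
  mul_eq_one_comm.mpr (TconjT_mul_T n)

lemma TconjT_Z_T (n : ℕ) [NeZero n] (j : ZMod n) :
    (Tmat n)ᴴ * Zmat n j * Tmat n = Zmat n (j - 1) := by
  ext x y
  rw [mul_T_apply, TconjT_mul_apply]
  by_cases h : x = y
  · subst h
    simp [Zmat, Matrix.diagonal_apply_eq, shift]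
  · rw [show (Zmat n j) (shift n x) (shift n y)
        = 0 from Matrix.diagonal_apply_ne _ (fun hc => h (shift_injective n hc)),
      show (Zmat n (j - 1)) x y = 0 from Matrix.diagonal_apply_ne _ h]

lemma TconjT_pow_Z_T_pow (n : ℕ) [NeZero n] (k : ℕ) (j : ZMod n) :
    ((Tmat n)ᴴ) ^ k * Zmat n j * Tmat n ^ k = Zmat n (j - k) := by
  induction k generalizing j with
  | zero => simp
  | succ k ih =>
    have : ((Tmat n)ᴴ) ^ (k + 1) * Zmat n j * Tmat n ^ (k + 1)
        = ((Tmat n)ᴴ) ^ k * ((Tmat n)ᴴ * Zmat n j * Tmat n) * Tmat n ^ k := by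
      rw [pow_succ, pow_succ']
      simp only [mul_assoc]
    rw [this, TconjT_Z_T, ih]
    push_cast
    ring_nf

/-- Eqs. (14)–(15) of the paper: for a translationally symmetric `ρ` and a family
`U_j = T^j U_0 (Tᴴ)^j`, each `tr(U_j ρ U_jᴴ Z_0)` equals `tr(U_0 ρ U_0ᴴ Z_{-j})`, and the
`n` parameter-shifted terms can be summed by measuring all qubits of a single circuit. -/
theorem stmt_14 (n : ℕ) [NeZero n]
    (ρ : Matrix (ZMod n → Fin 2) (ZMod n → Fin 2) ℂ) (hρ : Tmat n * ρ = ρ * Tmat n)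
    (U : ZMod n → Matrix (ZMod n → Fin 2) (ZMod n → Fin 2) ℂ)
    (hU : ∀ j : ZMod n, U j = Tmat n ^ j.val * U 0 * ((Tmat n)ᴴ) ^ j.val) :
    (∀ j : ZMod n, (U j * ρ * (U j)ᴴ * Zmat n 0).trace =
        (U 0 * ρ * (U 0)ᴴ * Zmat n (-j)).trace) ∧
      ∑ j : ZMod n, (U j * ρ * (U j)ᴴ * Zmat n 0).trace =
        ∑ j : ZMod n, (U 0 * ρ * (U 0)ᴴ * Zmat n j).trace := by
  set T := Tmat n with hT
  have key : ∀ j : ZMod n, (U j * ρ * (U j)ᴴ * Zmat n 0).trace =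
      (U 0 * ρ * (U 0)ᴴ * Zmat n (-j)).trace := by
    intro j
    set v := j.val with hv
    have hcomm : Commute T ρ := hρ
    have hcommT : Commute Tᴴ T := by
      unfold Commute SemiconjBy
      rw [TconjT_mul_T, T_mul_TconjT]
    have hpow1 : (Tᴴ) ^ v * T ^ v = 1 := by
      rw [← hcommT.mul_pow, TconjT_mul_T, one_pow]
    have hmid : (Tᴴ) ^ v * ρ * T ^ v = ρ := by
      rw [mul_assoc, ← (hcomm.pow_left v).eq, ← mul_assoc, hpow1, one_mul]
    have hconjTpow : ((Tᴴ) ^ v)ᴴ = T ^ v := by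
      rw [Matrix.conjTranspose_pow, Matrix.conjTranspose_conjTranspose]
    have hUρU : U j * ρ * (U j)ᴴ = T ^ v * (U 0 * ρ * (U 0)ᴴ) * (Tᴴ) ^ v := by
      rw [hU j, Matrix.conjTranspose_mul, Matrix.conjTranspose_mul, hconjTpow,
        Matrix.conjTranspose_pow]
      calc T ^ v * U 0 * Tᴴ ^ v * ρ * (T ^ v * ((U 0)ᴴ * Tᴴ ^ v))
          = T ^ v * U 0 * (Tᴴ ^ v * ρ * T ^ v) * ((U 0)ᴴ * Tᴴ ^ v) := by
            simp only [mul_assoc]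
        _ = T ^ v * (U 0 * ρ * (U 0)ᴴ) * Tᴴ ^ v := by rw [hmid]; simp only [mul_assoc]
    rw [hUρU]
    have : T ^ v * (U 0 * ρ * (U 0)ᴴ) * Tᴴ ^ v * Zmat n 0
        = T ^ v * ((U 0 * ρ * (U 0)ᴴ) * (Tᴴ ^ v * Zmat n 0)) := by
      simp only [mul_assoc]
    rw [this, Matrix.trace_mul_comm]
    have : U 0 * ρ * (U 0)ᴴ * (Tᴴ ^ v * Zmat n 0) * T ^ v
        = U 0 * ρ * (U 0)ᴴ * (Tᴴ ^ v * Zmat n 0 * T ^ v) := by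
      simp only [mul_assoc]
    rw [this, TconjT_pow_Z_T_pow]
    congr 2

    have hj : ((j.val : ZMod n)) = j := ZMod.natCast_rightInverse j
    rw [zero_sub, hj]
  refine ⟨key, ?_⟩
  calc ∑ j : ZMod n, (U j * ρ * (U j)ᴴ * Zmat n 0).trace
      = ∑ j : ZMod n, (U 0 * ρ * (U 0)ᴴ * Zmat n (-j)).trace := by
        exact Finset.sum_congr rfl fun j _ => key j
    _ = ∑ j : ZMod n, (U 0 * ρ * (U 0)ᴴ * Zmat n j).trace := by
        exact Fintype.sum_equiv (Equiv.neg (ZMod n)) _ _ fun j => by simp
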